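/- Fix δ ∈ (0,1) and θ ∈ {−1,+1}. Let b : (0,∞) → ℝ satisfy: b(z) = θ|b(z)| for z ∈ (0,δ], b(δ) ≠ 0, |b(z)|/z ≤ |b(δ)|/δ for z ∈ (0,δ], and |b(z)|/z ≤ M log(1/z) for z ∈ (0,δ]. For α ∈ (0,1) define b_{(α)}(z) = θ z (|b(z)|/z)^{α} (|b(δ)|/δ)^{1−α} for 0 < z ≤ δ and b_{(α)}(z) = b(z) for z > δ. Then b_{(α)} → b uniformly on (0,∞) as α → 1⁻. -/
import Mathlib


open Set Real

theorem stmt_14 (b : ℝ → ℝ) (δ M : ℝ) (θ : ℝ) (hθ : θ = 1 ∨ θ = -1)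
    (hδ : δ ∈ Ioo (0:ℝ) 1) (hM : 0 < M)
    (hsign : ∀ z ∈ Ioc (0:ℝ) δ, b z = θ * |b z|)
    (hbδ : b δ ≠ 0)
    (hmono : ∀ z ∈ Ioc (0:ℝ) δ, |b z| / z ≤ |b δ| / δ)
    (hgrowth : ∀ z ∈ Ioc (0:ℝ) δ, |b z| / z ≤ M * Real.log (1 / z)) :
    ∀ η > (0:ℝ), ∃ α₀ ∈ Ioo (0:ℝ) 1, ∀ α ∈ Ioo α₀ (1:ℝ), ∀ z > (0:ℝ),
      |(if z ≤ δ then θ * z * (|b z| / z) ^ α * (|b δ| / δ) ^ (1 - α) else b z) - b z|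
        ≤ η := by
  intro η hη
  obtain ⟨hδ0, hδ1⟩ := hδ
  have hbδ' : 0 < |b δ| := abs_pos.mpr hbδ
  set α₀ : ℝ := max (1/2) (1 - η / |b δ|) with hα₀def
  refine ⟨α₀, ⟨lt_of_lt_of_le (by norm_num) (le_max_left _ _), ?_⟩, ?_⟩
  · apply max_lt (by norm_num)
    have : 0 < η / |b δ| := div_pos hη hbδ'
    linarith
  intro α ⟨hα₀, hα1⟩ z hz
  by_cases hzδ : z ≤ δ
  · rw [if_pos hzδ]
    set r : ℝ := |b z| / z with hr
    set C : ℝ := |b δ| / δ with hC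
    have hr0 : 0 ≤ r := div_nonneg (abs_nonneg _) hz.le
    have hC0 : 0 < C := div_pos hbδ' hδ0
    have hrC : r ≤ C := hmono z ⟨hz, hzδ⟩
    have hα0 : (0:ℝ) < α := lt_trans (lt_of_lt_of_le (by norm_num) (le_max_left _ _)) hα₀
    have hbz : b z = θ * (z * r) := by
      rw [hsign z ⟨hz, hzδ⟩, hr]
      field_simp
    have hθabs : |θ| = 1 := by rcases hθ with h | h <;> simp [h]
    -- lower bound: r ≤ r^α * C^(1-α)
    have hlow : r ≤ r ^ α * C ^ (1 - α) := by
      calc r = r ^ α * r ^ (1 - α) := by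
              rw [← Real.rpow_add' hr0 (by norm_num)]; simp
        _ ≤ r ^ α * C ^ (1 - α) := by
              exact mul_le_mul_of_nonneg_left
                (Real.rpow_le_rpow hr0 hrC (by linarith)) (Real.rpow_nonneg hr0 α)
    -- upper bound via weighted AM-GM
    have hup : r ^ α * C ^ (1 - α) ≤ α * r + (1 - α) * C :=
      Real.geom_mean_le_arith_mean2_weighted hα0.le (by linarith) hr0 hC0.le (by ring)
    have key : θ * z * r ^ α * C ^ (1 - α) - b z = θ * (z * (r ^ α * C ^ (1 - α) - r)) := by
      rw [hbz]; ring
    rw [key, abs_mul, hθabs, one_mul, abs_mul, abs_of_nonneg hz.le,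
        abs_of_nonneg (by linarith)]
    have h1 : z * (r ^ α * C ^ (1 - α) - r) ≤ z * ((1 - α) * C) := by
      have : r ^ α * C ^ (1 - α) - r ≤ (1 - α) * C := by nlinarith
      exact mul_le_mul_of_nonneg_left this hz.le
    have h2 : z * ((1 - α) * C) ≤ δ * ((1 - α) * C) := by
      apply mul_le_mul_of_nonneg_right hzδ
      have h1α : (0:ℝ) ≤ 1 - α := by linarith
      positivity
    have h3 : δ * ((1 - α) * C) = (1 - α) * |b δ| := by
      rw [hC]; field_simp
    have h4 : (1 - α) * |b δ| ≤ η := by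
      have hα₀le : 1 - η / |b δ| ≤ α₀ := le_max_right _ _
      have : 1 - α < η / |b δ| := by linarith [lt_of_le_of_lt hα₀le hα₀]
      calc (1 - α) * |b δ| ≤ (η / |b δ|) * |b δ| := by nlinarith
        _ = η := by field_simp
    linarith
  · rw [if_neg hzδ]; simpa using hη.le
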